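/- Suppose f is a multiplicative function with f(p) ≠ -1 for all primes p dividing n. Then ∑_{d|n} |μ(d)| ω(d) f(d) = (∏_{p|n} (1 + f(p))) · ∑_{p|n} f(p)/(1 + f(p)). -/

import Mathlib

/-!
Only squarefree divisors contribute, and `d ↦ d.primeFactors` identifies them with the subsets
`t` of the prime factors of `n`, the summand becoming `#t * ∏ p ∈ t, f p`. Summing `#t * ∏ g`
over all subsets is the derivative at `x = 1` of `∏ (1 + x g)`, i.e. `∏ (1 + g) * ∑ g / (1 + g)`.
-/

open Finset ArithmeticFunction

section PowersetSums

variable {ι : Type*} [DecidableEq ι]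

theorem sum_powerset_insert_card_mul_prod {R : Type*} [CommSemiring R] {a : ι} {s : Finset ι}
    (ha : a ∉ s) (g : ι → R) :
    ∑ t ∈ (insert a s).powerset, (#t : R) * ∏ b ∈ t, g b =
      (1 + g a) * ∑ t ∈ s.powerset, (#t : R) * ∏ b ∈ t, g b + g a * ∏ b ∈ s, (1 + g b) := by
  have hinsert : ∀ t ∈ s.powerset, (#(insert a t) : R) * ∏ b ∈ insert a t, g b =
      g a * ((#t : R) * ∏ b ∈ t, g b) + g a * ∏ b ∈ t, g b := by
    intro t ht
    have hat : a ∉ t := fun h => ha (mem_powerset.mp ht h)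
    rw [card_insert_of_notMem hat, prod_insert hat]
    push_cast
    ring
  rw [sum_powerset_insert ha, sum_congr rfl hinsert, sum_add_distrib, ← mul_sum, ← mul_sum,
    ← prod_one_add]
  ring

theorem sum_powerset_card_mul_prod {K : Type*} [Field K] (s : Finset ι) (g : ι → K)
    (hg : ∀ a ∈ s, 1 + g a ≠ 0) :
    ∑ t ∈ s.powerset, (#t : K) * ∏ a ∈ t, g a =
      (∏ a ∈ s, (1 + g a)) * ∑ a ∈ s, g a / (1 + g a) := by
  induction s using Finset.induction_on with
  | empty => simp
  | insert a s ha ih =>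
    have hga : 1 + g a ≠ 0 := hg a (mem_insert_self a s)
    rw [sum_powerset_insert_card_mul_prod ha, ih fun b hb => hg b (mem_insert_of_mem hb),
      prod_insert ha, sum_insert ha]
    field_simp
    ring

end PowersetSums

theorem map_prod_of_prime_of_coprime_mul {M : Type*} [CommMonoid M] {f : ℕ → M} (hf1 : f 1 = 1)
    (hfm : ∀ a b : ℕ, Nat.Coprime a b → f (a * b) = f a * f b)
    (t : Finset ℕ) (ht : ∀ p ∈ t, p.Prime) :
    f (∏ p ∈ t, p) = ∏ p ∈ t, f p := by
  induction t using Finset.induction_on with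
  | empty => simpa using hf1
  | insert a s ha ih =>
    have hcop : Nat.Coprime a (∏ p ∈ s, p) :=
      Nat.Coprime.prod_right fun b hb =>
        (Nat.coprime_primes (ht a (mem_insert_self a s)) (ht b (mem_insert_of_mem hb))).mpr
          fun h => ha (h ▸ hb)
    rw [prod_insert ha, prod_insert ha, hfm _ _ hcop,
      ih fun p hp => ht p (mem_insert_of_mem hp)]

theorem ArithmeticFunction.cardDistinctFactors_eq_card_primeFactors (n : ℕ) :
    cardDistinctFactors n = #n.primeFactors := by
  rw [cardDistinctFactors_apply, ← List.card_toFinset]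
  rfl

theorem Nat.sum_divisors_filter_squarefree_eq_sum_powerset {α : Type*} [AddCommMonoid α]
    {n : ℕ} (hn : n ≠ 0) (h : Finset ℕ → α) :
    ∑ d ∈ n.divisors with Squarefree d, h d.primeFactors = ∑ t ∈ n.primeFactors.powerset, h t := by
  rw [Nat.sum_divisors_filter_squarefree hn, Nat.factors_eq]
  refine sum_congr rfl fun t ht => ?_
  rw [t.prod_val, Function.id_def,
    Nat.primeFactors_prod fun p hp => Nat.prime_of_mem_primeFactors (mem_powerset.mp ht hp)]

/-- For multiplicative `f` with `f(p) ≠ -1` for all primes `p | n`: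
`∑_{d|n} |μ(d)| ω(d) f(d) = (∏_{p|n} (1 + f(p))) · ∑_{p|n} f(p)/(1 + f(p))`. -/
theorem sum_abs_moebius_omega_mul (f : ℕ → ℂ) (n : ℕ) (hn : 1 ≤ n)
    (hf1 : f 1 = 1) (hfm : ∀ a b : ℕ, Nat.Coprime a b → f (a * b) = f a * f b)
    (hfp : ∀ p : ℕ, p.Prime → p ∣ n → f p ≠ -1) :
    (∑ d ∈ n.divisors,
        ((|(ArithmeticFunction.moebius d : ℤ)| : ℤ) : ℂ) *
          (ArithmeticFunction.cardDistinctFactors d : ℂ) * f d) =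
      (∏ p ∈ n.primeFactors, (1 + f p)) * ∑ p ∈ n.primeFactors, f p / (1 + f p) := by
  have hsummand : ∀ d, ((|(moebius d : ℤ)| : ℤ) : ℂ) * (cardDistinctFactors d : ℂ) * f d =
      if Squarefree d then (#d.primeFactors : ℂ) * ∏ p ∈ d.primeFactors, f p else 0 := by
    intro d
    split_ifs with hd
    · rw [abs_moebius_eq_one_of_squarefree hd, cardDistinctFactors_eq_card_primeFactors,
        ← map_prod_of_prime_of_coprime_mul hf1 hfm _ fun p => Nat.prime_of_mem_primeFactors,
        Nat.prod_primeFactors_of_squarefree hd]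
      push_cast
      ring
    · simp [moebius_eq_zero_of_not_squarefree hd]
  have hne : ∀ p ∈ n.primeFactors, 1 + f p ≠ 0 := fun p hp h =>
    hfp p (Nat.prime_of_mem_primeFactors hp) (Nat.dvd_of_mem_primeFactors hp)
      (by linear_combination h)
  simp_rw [hsummand]
  rw [← sum_filter, Nat.sum_divisors_filter_squarefree_eq_sum_powerset (by omega)
    fun t => (#t : ℂ) * ∏ p ∈ t, f p, sum_powerset_card_mul_prod _ _ hne]
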